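/- Let y, γ ∈ ℝ, v > 0, β > 0, λ ∈ ℝ, λ₁ ∈ ℝ, and define α(o) = log(exp(o) + 1) + 1. Let L(o) = (1/2)·log(π/v) − α(o)·log(Ω) + (α(o) + 1/2)·log((y − γ)²·v + Ω) + log(Real.Gamma(α(o))) − log(Real.Gamma(α(o) + 1/2)) with Ω = 2β(1 + v), R(o) = |y − γ|·(2v + α(o)), and U(o) = −|y − γ|·log(exp(α(o) − 1) − 1). Then the derivative of the total UR-ERN loss o ↦ L(o) + λ·R(o) + λ₁·U(o) tends to −λ₁·|y − γ| as o → −∞; in particular, if y ≠ γ and λ₁ ≠ 0, this limit is nonzero. -/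

import Mathlib

/-!
Since `exp (α(o) - 1) - 1 = exp o`, the uncertainty term is `-λ₁ |y - γ| o`, whose derivative is
the constant `-λ₁ |y - γ|`. The ERN part depends on `o` only through `α(o)`; its derivative is
`L'(α(o)) · σ(o)` with `σ(o) = exp o / (exp o + 1) → 0`, while `L'(α(o)) → L'(1)` stays bounded
because `L` is `C¹` near `α = 1` (log-Gamma is smooth on `(0, ∞)`).
-/

open Real Filter

/-- SoftPlus activation plus one. -/
noncomputable def softplusAlpha (o : ℝ) : ℝ := Real.log (Real.exp o + 1) + 1

open Topology

theorem Complex.contDiffAt_Gamma {n : WithTop ℕ∞} {s : ℂ} (hs : ∀ m : ℕ, s ≠ -m) :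
    ContDiffAt ℂ n Complex.Gamma s := by
  -- `1 / Γ` is entire and `Γ` has no zeros
  have hinv : ContDiffAt ℂ n (fun s => (Complex.Gamma s)⁻¹) s :=
    Complex.differentiable_one_div_Gamma.contDiff.contDiffAt
  simpa only [Pi.inv_def, inv_inv] using hinv.inv (inv_ne_zero (Complex.Gamma_ne_zero hs))

theorem Real.contDiffAt_Gamma {n : WithTop ℕ∞} {x : ℝ} (hx : ∀ m : ℕ, x ≠ -m) :
    ContDiffAt ℝ n Real.Gamma x := by
  have hx' : ∀ m : ℕ, (x : ℂ) ≠ -m := fun m h => hx m (by exact_mod_cast h)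
  simpa [Complex.Gamma_ofReal] using (Complex.contDiffAt_Gamma (n := n) hx').real_of_complex

theorem tendsto_deriv_comp_of_contDiffAt {f φ φ' : ℝ → ℝ} {a : ℝ} {l : Filter ℝ}
    (hφ : ∀ x, HasDerivAt φ (φ' x) x) (hf : ∀ x, DifferentiableAt ℝ f (φ x))
    (hfa : ContDiffAt ℝ 1 f a) (hφa : Tendsto φ l (𝓝 a)) (hφ' : Tendsto φ' l (𝓝 0)) :
    Tendsto (deriv (f ∘ φ)) l (𝓝 0) := by
  have hderiv : deriv (f ∘ φ) = fun x => deriv f (φ x) * φ' x :=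
    funext fun x => ((hf x).hasDerivAt.comp x (hφ x)).deriv
  have hcont : ContinuousAt (deriv f) a :=
    (hfa.derivWithin (m := 0) (by norm_num)).continuousAt
  rw [hderiv, ← mul_zero (deriv f a)]
  exact (hcont.tendsto.comp hφa).mul hφ'

theorem one_lt_softplusAlpha (o : ℝ) : 1 < softplusAlpha o := by
  have : 0 < Real.log (Real.exp o + 1) := Real.log_pos (by linarith [Real.exp_pos o])
  unfold softplusAlpha
  linarith

theorem log_exp_softplusAlpha_sub_one_sub_one (o : ℝ) :
    Real.log (Real.exp (softplusAlpha o - 1) - 1) = o := by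
  rw [softplusAlpha, add_sub_cancel_right, Real.exp_log (by positivity), add_sub_cancel_right,
    Real.log_exp]

theorem hasDerivAt_softplusAlpha (o : ℝ) :
    HasDerivAt softplusAlpha (Real.exp o / (Real.exp o + 1)) o :=
  (((Real.hasDerivAt_exp o).add_const 1).log (by positivity)).add_const 1

theorem tendsto_softplusAlpha_atBot : Tendsto softplusAlpha atBot (𝓝 1) := by
  have h : Tendsto (fun o => Real.exp o + 1) atBot (𝓝 1) := by
    simpa using Real.tendsto_exp_atBot.add_const 1
  unfold softplusAlpha
  simpa using ((Real.continuousAt_log one_ne_zero).tendsto.comp h).add_const 1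

theorem tendsto_exp_div_exp_add_one_atBot :
    Tendsto (fun o => Real.exp o / (Real.exp o + 1)) atBot (𝓝 0) := by
  have h := Real.tendsto_exp_atBot.div (Real.tendsto_exp_atBot.add_const 1)
    (by norm_num : (0 : ℝ) + 1 ≠ 0)
  rwa [zero_div] at h

/-- The ERN loss `L^NLL + λ · L^R` as a function of the evidential parameter `α`. -/
noncomputable def ernLoss (y γ v β lam α : ℝ) : ℝ :=
  ((1 / 2) * Real.log (Real.pi / v)
    - α * Real.log (2 * β * (1 + v))
    + (α + 1 / 2) * Real.log ((y - γ) ^ 2 * v + 2 * β * (1 + v))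
    + Real.log (Real.Gamma α)
    - Real.log (Real.Gamma (α + 1 / 2)))
  + lam * (|y - γ| * (2 * v + α))

theorem contDiffAt_ernLoss (y γ v β lam : ℝ) {α : ℝ} (hα : 0 < α) :
    ContDiffAt ℝ 1 (ernLoss y γ v β lam) α := by
  have hΓ : ∀ {x : ℝ}, 0 < x → ContDiffAt ℝ 1 (fun t => Real.log (Real.Gamma t)) x := fun hx =>
    (Real.contDiffAt_Gamma fun m => by linarith [(m.cast_nonneg : (0 : ℝ) ≤ m)]).log
      (Real.Gamma_pos_of_pos hx).ne'
  have hΓ' : ContDiffAt ℝ 1 (fun x => Real.log (Real.Gamma (x + 1 / 2))) α :=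
    (hΓ (by linarith)).comp α (contDiffAt_id.add contDiffAt_const)
  unfold ernLoss
  fun_prop

theorem stmt_16_general (y γ v β lam lam1 : ℝ) :
    Tendsto
      (deriv (fun o : ℝ =>
        ((1 / 2) * Real.log (Real.pi / v)
          - softplusAlpha o * Real.log (2 * β * (1 + v))
          + (softplusAlpha o + 1 / 2) * Real.log ((y - γ) ^ 2 * v + 2 * β * (1 + v))
          + Real.log (Real.Gamma (softplusAlpha o))
          - Real.log (Real.Gamma (softplusAlpha o + 1 / 2)))
        + lam * (|y - γ| * (2 * v + softplusAlpha o))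
        + lam1 * (-|y - γ| * Real.log (Real.exp (softplusAlpha o - 1) - 1))))
      atBot (nhds (-lam1 * |y - γ|))
    ∧ (y ≠ γ → lam1 ≠ 0 → -lam1 * |y - γ| ≠ 0) := by
  have hdiff : ∀ o, DifferentiableAt ℝ (ernLoss y γ v β lam) (softplusAlpha o) := fun o =>
    (contDiffAt_ernLoss y γ v β lam
      (zero_lt_one.trans (one_lt_softplusAlpha o))).differentiableAt one_ne_zero
  have hderiv : ∀ o,
      HasDerivAt (ernLoss y γ v β lam ∘ softplusAlpha + fun o => lam1 * (-|y - γ| * o))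
        (deriv (ernLoss y γ v β lam ∘ softplusAlpha) o + -lam1 * |y - γ|) o := fun o =>
    ((hdiff o).comp o (hasDerivAt_softplusAlpha o).differentiableAt).hasDerivAt.add
      (by simpa using ((hasDerivAt_id o).const_mul (-|y - γ|)).const_mul lam1)
  simp only [log_exp_softplusAlpha_sub_one_sub_one]
  refine ⟨?_, fun hy hlam => mul_ne_zero (neg_ne_zero.2 hlam) (abs_ne_zero.2 (sub_ne_zero.2 hy))⟩
  change Tendsto (deriv (ernLoss y γ v β lam ∘ softplusAlpha + fun o => lam1 * (-|y - γ| * o)))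
    atBot _
  rw [funext fun o => (hderiv o).deriv]
  simpa using (tendsto_deriv_comp_of_contDiffAt hasDerivAt_softplusAlpha hdiff
    (contDiffAt_ernLoss y γ v β lam one_pos) tendsto_softplusAlpha_atBot
    tendsto_exp_div_exp_add_one_atBot).add_const (-lam1 * |y - γ|)

theorem stmt_16 (y γ v β lam lam1 : ℝ) (hv : 0 < v) (hβ : 0 < β) :
    Tendsto
      (deriv (fun o : ℝ =>
        ((1 / 2) * Real.log (Real.pi / v)
          - softplusAlpha o * Real.log (2 * β * (1 + v))
          + (softplusAlpha o + 1 / 2) * Real.log ((y - γ) ^ 2 * v + 2 * β * (1 + v))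
          + Real.log (Real.Gamma (softplusAlpha o))
          - Real.log (Real.Gamma (softplusAlpha o + 1 / 2)))
        + lam * (|y - γ| * (2 * v + softplusAlpha o))
        + lam1 * (-|y - γ| * Real.log (Real.exp (softplusAlpha o - 1) - 1))))
      atBot (nhds (-lam1 * |y - γ|))
    ∧ (y ≠ γ → lam1 ≠ 0 → -lam1 * |y - γ| ≠ 0) :=
  stmt_16_general y γ v β lam lam1
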